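/- arXiv:0807.0357 — 4 statements merged into one kernel-verified Lean document; each statement's English description precedes it below -/
import Mathlib

section
/- For two symmetric real n×n matrices A and B, the square of the Frobenius norm of the commutator satisfies N(AB − BA) ≤ 2·N(A)·N(B). -/
/-!
Diagonalise `A = U D Uᵀ` with `U` orthogonal. Conjugation by `U` is a ⋆-algebra automorphism
preserving `N`, so `N(AB - BA) = N(DB' - B'D)` with `B' = Uᵀ B U`, `N(A) = N(D)` and
`N(B) = N(B')`. The commutator with a diagonal matrix has entries `(dᵢ - dⱼ) B'ᵢⱼ`, and
`(dᵢ - dⱼ)² ≤ 2 (dᵢ² + dⱼ²) ≤ 2 N(D)`.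
-/

open Matrix

noncomputable def frobN {n : ℕ} (A : Matrix (Fin n) (Fin n) ℝ) : ℝ := (Aᵀ * A).trace

lemma Matrix.trace_conjStarAlgAut {ι R : Type*} [Fintype ι] [DecidableEq ι] [CommRing R]
    [StarRing R] (U : unitaryGroup ι R) (M : Matrix ι ι R) :
    (Unitary.conjStarAlgAut R _ U M).trace = M.trace := by
  rw [Unitary.conjStarAlgAut_apply, trace_mul_cycle, Unitary.coe_star_mul_self, one_mul]

lemma Matrix.diagonal_mul_sub_mul_diagonal_apply {ι R : Type*} [Fintype ι] [DecidableEq ι]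
    [CommRing R] (d : ι → R) (M : Matrix ι ι R) (i j : ι) :
    (diagonal d * M - M * diagonal d) i j = (d i - d j) * M i j := by
  rw [sub_apply, diagonal_mul, mul_diagonal, sub_mul, mul_comm (M i j)]

lemma sq_sub_le_two_mul_sum_sq {ι : Type*} [Fintype ι] (d : ι → ℝ) (i j : ι) :
    (d i - d j) ^ 2 ≤ 2 * ∑ k, d k ^ 2 := by
  classical
  rcases eq_or_ne i j with rfl | hij
  · rw [sub_self, sq, zero_mul]
    positivity
  · have hpair : d i ^ 2 + d j ^ 2 ≤ ∑ k, d k ^ 2 := by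
      simpa only [Finset.sum_pair hij] using
        Finset.sum_le_univ_sum_of_nonneg (s := {i, j}) fun k => sq_nonneg (d k)
    nlinarith [sq_nonneg (d i + d j)]

section frobN

variable {n : ℕ}

lemma frobN_eq_trace_conjTranspose_mul (M : Matrix (Fin n) (Fin n) ℝ) :
    frobN M = (Mᴴ * M).trace := by
  rw [frobN, conjTranspose_eq_transpose_of_trivial]

lemma frobN_eq_sum_sq (M : Matrix (Fin n) (Fin n) ℝ) : frobN M = ∑ i, ∑ j, M i j ^ 2 := by
  rw [frobN, trace, Finset.sum_comm]
  simp only [diag_apply, mul_apply, transpose_apply, sq]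

lemma frobN_diagonal (d : Fin n → ℝ) : frobN (diagonal d) = ∑ i, d i ^ 2 := by
  simp [frobN_eq_sum_sq, diagonal_apply, apply_ite (· ^ 2)]

lemma frobN_conjStarAlgAut (U : unitaryGroup (Fin n) ℝ) (M : Matrix (Fin n) (Fin n) ℝ) :
    frobN (Unitary.conjStarAlgAut ℝ _ U M) = frobN M := by
  rw [frobN_eq_trace_conjTranspose_mul, frobN_eq_trace_conjTranspose_mul, ← star_eq_conjTranspose,
    ← map_star, ← map_mul, trace_conjStarAlgAut, star_eq_conjTranspose]

lemma frobN_diagonal_mul_sub_mul_diagonal_le (d : Fin n → ℝ) (M : Matrix (Fin n) (Fin n) ℝ) :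
    frobN (diagonal d * M - M * diagonal d) ≤ 2 * frobN (diagonal d) * frobN M := by
  rw [frobN_eq_sum_sq, frobN_eq_sum_sq M, frobN_diagonal, Finset.mul_sum]
  gcongr with i _
  rw [Finset.mul_sum]
  gcongr with j _
  rw [diagonal_mul_sub_mul_diagonal_apply, mul_pow]
  exact mul_le_mul_of_nonneg_right (sq_sub_le_two_mul_sum_sq d i j) (sq_nonneg _)

end frobN

theorem comm_norm_le_general {n : ℕ} (A B : Matrix (Fin n) (Fin n) ℝ)
    (hA : A.IsSymm) :
    frobN (A * B - B * A) ≤ 2 * frobN A * frobN B := by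
  have hA' : A.IsHermitian := isHermitian_iff_isSymm.mpr hA
  set φ := Unitary.conjStarAlgAut ℝ _ hA'.eigenvectorUnitary
  set D := diagonal hA'.eigenvalues
  set B' := φ.symm B
  have hAD : A = φ D := hA'.spectral_theorem
  have hBB' : B = φ B' := (φ.apply_symm_apply B).symm
  have hcomm : A * B - B * A = φ (D * B' - B' * D) := by
    rw [map_sub, map_mul, map_mul, ← hAD, ← hBB']
  calc frobN (A * B - B * A) = frobN (D * B' - B' * D) := by rw [hcomm, frobN_conjStarAlgAut]
    _ ≤ 2 * frobN D * frobN B' := frobN_diagonal_mul_sub_mul_diagonal_le _ _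
    _ = 2 * frobN A * frobN B := by rw [hAD, hBB', frobN_conjStarAlgAut, frobN_conjStarAlgAut]

theorem comm_norm_le {n : ℕ} (A B : Matrix (Fin n) (Fin n) ℝ)
    (hA : A.IsSymm) (hB : B.IsSymm) :
    frobN (A * B - B * A) ≤ 2 * frobN A * frobN B :=
  comm_norm_le_general A B hA
end

section
/- Any totally symmetric 3-tensor h on ℝⁿ satisfies ‖h‖² ≥ (3n²/(n+2))·|H|², where H^m = (1/n)Σ_i h^{m}_{ii}; equality holds iff h^{m}_{ij} = (n/(n+2))·(H^m δ_{ij} + H^i δ_{jm} + H^j δ_{im}). -/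
open BigOperators

/-- The tensor c^m_{ij} = (n/(n+2))·(H^m δ_{ij} + H^i δ_{jm} + H^j δ_{im}),
written as `cTensor n H i j m`. -/
noncomputable def cTensor (n : ℕ) (H : Fin n → ℝ) (i j m : Fin n) : ℝ :=
  ((n : ℝ) / (n + 2)) *
    (H m * (if i = j then (1 : ℝ) else 0) + H i * (if j = m then (1 : ℝ) else 0) +
      H j * (if i = m then (1 : ℝ) else 0))

private lemma bracket_sum {n : ℕ} (hn : 1 ≤ n) (h : Fin n → Fin n → Fin n → ℝ)
    (hsym : ∀ i j m, h i j m = h j i m ∧ h i j m = h m j i)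
    (H : Fin n → ℝ) (hH : ∀ m, H m = (1 / (n : ℝ)) * ∑ i, h i i m) :
    ∑ i, ∑ j, ∑ m, h i j m * ((H m * (if i = j then (1 : ℝ) else 0) +
      H i * (if j = m then (1 : ℝ) else 0) +
      H j * (if i = m then (1 : ℝ) else 0))) = 3 * n * ∑ m, (H m)^2 := by
  have htr : ∀ m, ∑ i, h i i m = n * H m := by
    intro m
    rw [hH m]
    have : (n:ℝ) ≠ 0 := by positivity
    field_simp
  simp only [mul_add, mul_ite, ite_mul, mul_zero, zero_mul, mul_one,
    Finset.sum_add_distrib, Finset.sum_ite_eq, Finset.sum_ite_eq', Finset.mem_univ, if_true,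
    Finset.sum_ite_irrel, Finset.sum_const_zero]
  have e1 : ∑ x : Fin n, ∑ x_1 : Fin n, h x x_1 x_1 * H x = n * ∑ m, (H m)^2 := by
    calc ∑ x : Fin n, ∑ x_1 : Fin n, h x x_1 x_1 * H x
        = ∑ x : Fin n, (∑ x_1 : Fin n, h x_1 x_1 x) * H x := by
          refine Finset.sum_congr rfl fun x _ => ?_
          rw [Finset.sum_mul]
          refine Finset.sum_congr rfl fun y _ => ?_
          congr 1
          rw [(hsym x y y).2, (hsym y y x).1]
      _ = n * ∑ m, (H m)^2 := by
          simp only [htr]; rw [Finset.mul_sum]; ring_nf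
  have e2 : ∑ x : Fin n, ∑ x_1 : Fin n, h x x_1 x * H x_1 = n * ∑ m, (H m)^2 := by
    calc ∑ x : Fin n, ∑ x_1 : Fin n, h x x_1 x * H x_1
        = ∑ x_1 : Fin n, ∑ x : Fin n, h x x x_1 * H x_1 := by
          rw [Finset.sum_comm]
          refine Finset.sum_congr rfl fun x1 _ => Finset.sum_congr rfl fun x _ => ?_
          congr 1
          rw [(hsym x x1 x).1, (hsym x1 x x).2]
      _ = n * ∑ m, (H m)^2 := by
          simp only [← Finset.sum_mul, htr]; rw [Finset.mul_sum]; ring_nf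
  have e0 : ∑ x : Fin n, ∑ x_2 : Fin n, h x x x_2 * H x_2 = n * ∑ m, (H m)^2 := by
    rw [Finset.sum_comm]
    simp only [← Finset.sum_mul, htr]
    rw [Finset.mul_sum]; ring_nf
  rw [e1, e2, e0]
  ring

private lemma cTensor_sym {n : ℕ} (H : Fin n → ℝ) :
    ∀ i j m, cTensor n H i j m = cTensor n H j i m ∧ cTensor n H i j m = cTensor n H m j i := by
  intro i j m
  unfold cTensor
  constructor <;>
  · congr 1
    simp only [eq_comm]
    by_cases h1 : i = j <;> by_cases h2 : j = m <;> by_cases h3 : i = m <;>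
      simp_all

private lemma cTensor_trace {n : ℕ} (hn : 1 ≤ n) (H : Fin n → ℝ) :
    ∀ m, H m = (1 / (n : ℝ)) * ∑ i, cTensor n H i i m := by
  intro m
  have hn0 : (n:ℝ) ≠ 0 := by positivity
  have hn2 : (n:ℝ) + 2 ≠ 0 := by positivity
  unfold cTensor
  simp only [if_true, mul_one, ← Finset.mul_sum]
  rw [Finset.sum_add_distrib]
  simp only [mul_ite, mul_one, mul_zero, Finset.sum_add_distrib, Finset.sum_const,
    Finset.card_univ, Fintype.card_fin, nsmul_eq_mul, Finset.sum_ite_eq', Finset.mem_univ,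
    if_true]
  field_simp
  ring

/-- Pointwise pinching: ‖h‖² ≥ (3n²/(n+2))·|H|², with equality iff h = c. -/
theorem pinching_inequality {n : ℕ} (hn : 1 ≤ n) (h : Fin n → Fin n → Fin n → ℝ)
    (hsym : ∀ i j m, h i j m = h j i m ∧ h i j m = h m j i)
    (H : Fin n → ℝ) (hH : ∀ m, H m = (1 / (n : ℝ)) * ∑ i, h i i m) :
    (3 * (n : ℝ) ^ 2 / ((n : ℝ) + 2)) * (∑ m, (H m) ^ 2) ≤ ∑ i, ∑ j, ∑ m, (h i j m) ^ 2 ∧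
      ((∑ i, ∑ j, ∑ m, (h i j m) ^ 2 = (3 * (n : ℝ) ^ 2 / ((n : ℝ) + 2)) * ∑ m, (H m) ^ 2) ↔
        ∀ i j m, h i j m = cTensor n H i j m) := by
  have hn2 : (n:ℝ) + 2 ≠ 0 := by positivity
  -- ∑ h·c
  have hc : ∑ i, ∑ j, ∑ m, h i j m * cTensor n H i j m
      = ((n:ℝ) / (n + 2)) * (3 * n * ∑ m, (H m)^2) := by
    rw [← bracket_sum hn h hsym H hH]
    simp only [Finset.mul_sum]
    refine Finset.sum_congr rfl fun i _ => Finset.sum_congr rfl fun j _ =>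
      Finset.sum_congr rfl fun m _ => ?_
    unfold cTensor; ring
  -- ∑ c·c
  have cc : ∑ i, ∑ j, ∑ m, (cTensor n H i j m)^2
      = ((n:ℝ) / (n + 2)) * (3 * n * ∑ m, (H m)^2) := by
    rw [← bracket_sum hn (cTensor n H) (cTensor_sym H) H (cTensor_trace hn H)]
    simp only [Finset.mul_sum]
    refine Finset.sum_congr rfl fun i _ => Finset.sum_congr rfl fun j _ =>
      Finset.sum_congr rfl fun m _ => ?_
    simp only [cTensor]
    ring
  have hKeq : ((n:ℝ) / (n + 2)) * (3 * n * ∑ m, (H m)^2)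
      = (3 * (n : ℝ) ^ 2 / ((n : ℝ) + 2)) * ∑ m, (H m) ^ 2 := by
    field_simp
  have key : ∑ i, ∑ j, ∑ m, (h i j m - cTensor n H i j m)^2
      = (∑ i, ∑ j, ∑ m, (h i j m)^2) - (3 * (n : ℝ) ^ 2 / ((n : ℝ) + 2)) * ∑ m, (H m) ^ 2 := by
    have expand : ∀ i j m, (h i j m - cTensor n H i j m)^2
        = (h i j m)^2 - 2 * (h i j m * cTensor n H i j m) + (cTensor n H i j m)^2 := by
      intro i j m; ring
    simp only [expand, Finset.sum_add_distrib, Finset.sum_sub_distrib, ← Finset.mul_sum]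
    rw [hc, cc, hKeq]
    ring
  have hnn : (0:ℝ) ≤ ∑ i, ∑ j, ∑ m, (h i j m - cTensor n H i j m)^2 :=
    Finset.sum_nonneg fun i _ => Finset.sum_nonneg fun j _ =>
      Finset.sum_nonneg fun m _ => sq_nonneg _
  constructor
  · linarith [key, hnn]
  · constructor
    · intro heq
      have hz : ∑ i, ∑ j, ∑ m, (h i j m - cTensor n H i j m)^2 = 0 := by
        rw [key, heq]; ring
      intro i j m
      have h1 := (Finset.sum_eq_zero_iff_of_nonneg (fun i _ => Finset.sum_nonneg fun j _ =>
        Finset.sum_nonneg fun m _ => sq_nonneg (h i j m - cTensor n H i j m))).1 hz i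
        (Finset.mem_univ i)
      have h2 := (Finset.sum_eq_zero_iff_of_nonneg (fun j _ =>
        Finset.sum_nonneg fun m _ => sq_nonneg (h i j m - cTensor n H i j m))).1 h1 j
        (Finset.mem_univ j)
      have h3 := (Finset.sum_eq_zero_iff_of_nonneg (fun m _ =>
        sq_nonneg (h i j m - cTensor n H i j m))).1 h2 m (Finset.mem_univ m)
      have := pow_eq_zero_iff (n := 2) (by norm_num) |>.1 h3
      linarith [this]
    · intro hcz
      have : ∑ i, ∑ j, ∑ m, (h i j m - cTensor n H i j m)^2 = 0 := by
        apply Finset.sum_eq_zero; intro i _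
        apply Finset.sum_eq_zero; intro j _
        apply Finset.sum_eq_zero; intro m _
        rw [hcz i j m]; ring
      linarith [key, this]
end

section
/- For the Whitney sphere map ψ(x₀,…,x_n) = (r/(1+x₀²))·(x₁,…,x_n, x₀x₁,…,x₀x_n) restricted to the unit sphere Sⁿ ⊂ ℝ^{n+1}, the points (1,0,…,0) and (−1,0,…,0) have the same image, namely 0 ∈ ℝ^{2n}, and ψ is injective on Sⁿ ∖ {(±1,0,…,0)}. -/
open BigOperators

/-- The Whitney sphere map (with center 0 and radius r),
ψ(x₀,…,x_n) = (r/(1+x₀²))·(x₁,…,x_n, x₀x₁,…,x₀x_n) ∈ ℝⁿ × ℝⁿ ≅ ℂⁿ. -/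
noncomputable def whitneyMap (n : ℕ) (r : ℝ) (x : Fin (n + 1) → ℝ) :
    (Fin n → ℝ) × (Fin n → ℝ) :=
  (fun i => r / (1 + (x 0) ^ 2) * x i.succ,
   fun i => r / (1 + (x 0) ^ 2) * (x 0 * x i.succ))

/-- The Whitney sphere has exactly one self-intersection point: the two poles
(±1,0,…,0) are both mapped to 0, and ψ is injective away from the poles. -/
theorem whitney_self_intersection {n : ℕ} (hn : 1 ≤ n) (r : ℝ) (hr : 0 < r)
    (p q : Fin (n + 1) → ℝ)
    (hp : p = fun i => if i = 0 then (1 : ℝ) else 0)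
    (hq : q = fun i => if i = 0 then (-1 : ℝ) else 0) :
    whitneyMap n r p = 0 ∧ whitneyMap n r q = 0 ∧
      ∀ x y : Fin (n + 1) → ℝ, (∑ i, (x i) ^ 2 = 1) → (∑ i, (y i) ^ 2 = 1) →
        x ≠ p → x ≠ q → y ≠ p → y ≠ q → whitneyMap n r x = whitneyMap n r y → x = y := by
  subst hp hq
  refine ⟨?_, ?_, ?_⟩
  · refine Prod.ext ?_ ?_ <;> funext i <;>
      simp [whitneyMap, Fin.succ_ne_zero]
  · refine Prod.ext ?_ ?_ <;> funext i <;>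
      simp [whitneyMap, Fin.succ_ne_zero]
  · intro x y hx hy hxp hxq hyp hyq h
    have hc : r / (1 + (x 0) ^ 2) ≠ 0 := by positivity
    have hd : r / (1 + (y 0) ^ 2) ≠ 0 := by positivity
    have h1 : ∀ i : Fin n,
        r / (1 + (x 0) ^ 2) * x i.succ = r / (1 + (y 0) ^ 2) * y i.succ :=
      fun i => congrFun (congrArg Prod.fst h) i
    have h2 : ∀ i : Fin n,
        r / (1 + (x 0) ^ 2) * (x 0 * x i.succ)
          = r / (1 + (y 0) ^ 2) * (y 0 * y i.succ) :=
      fun i => congrFun (congrArg Prod.snd h) i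
    have key : ∀ z : Fin (n + 1) → ℝ, (∑ i, (z i) ^ 2 = 1) →
        z ≠ (fun i => if i = 0 then (1 : ℝ) else 0) →
        z ≠ (fun i => if i = 0 then (-1 : ℝ) else 0) →
        ∃ i : Fin n, z i.succ ≠ 0 := by
      intro z hz hzp hzq
      by_contra hall
      push_neg at hall
      rw [Fin.sum_univ_succ] at hz
      simp only [hall, ne_eq, OfNat.ofNat_ne_zero, not_false_eq_true, zero_pow,
        Finset.sum_const_zero, add_zero] at hz
      have hz2 : (z 0 - 1) * (z 0 + 1) = 0 := by nlinarith
      rcases mul_eq_zero.mp hz2 with h0 | h0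
      · apply hzp
        funext i
        refine Fin.cases ?_ (fun j => ?_) i
        · simpa using by linarith
        · simp [hall j, Fin.succ_ne_zero]
      · apply hzq
        funext i
        refine Fin.cases ?_ (fun j => ?_) i
        · simpa using by linarith
        · simp [hall j, Fin.succ_ne_zero]
    obtain ⟨i, hxi⟩ := key x hx hxp hxq
    have hcx : r / (1 + (x 0) ^ 2) * x i.succ ≠ 0 := mul_ne_zero hc hxi
    have hab : x 0 = y 0 := by
      apply mul_right_cancel₀ hcx
      calc x 0 * (r / (1 + (x 0) ^ 2) * x i.succ)
          = r / (1 + (x 0) ^ 2) * (x 0 * x i.succ) := by ring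
        _ = r / (1 + (y 0) ^ 2) * (y 0 * y i.succ) := h2 i
        _ = y 0 * (r / (1 + (y 0) ^ 2) * y i.succ) := by ring
        _ = y 0 * (r / (1 + (x 0) ^ 2) * x i.succ) := by rw [← h1 i]
    funext j
    refine Fin.cases hab (fun k => ?_) j
    have e := h1 k
    rw [hab] at e
    exact mul_left_cancel₀ hd e
end

section
/- The Whitney map ψ(x₀,…,x_n) = (r/(1+x₀²))·(x₁,…,x_n, x₀x₁,…,x₀x_n) on Sⁿ is a Lagrangian immersion into ℂⁿ: at every point of Sⁿ its differential has rank n and ψ*ω = 0, where ω is the standard symplectic form on ℝ^{2n} ≅ ℂⁿ. -/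
open BigOperators

/-- The standard symplectic form ω = Σ du_i ∧ dv_i on ℝⁿ × ℝⁿ ≅ ℂⁿ. -/
def stdSymp (n : ℕ) (a b : (Fin n → ℝ) × (Fin n → ℝ)) : ℝ :=
  ∑ i, (a.1 i * b.2 i - a.2 i * b.1 i)

/-!
Write `x = (x₀, x')` and `c = r / (1 + x₀²)`. The differential of the Whitney map is
`dψ(v) = a (x', x₀x') + c (v', v₀x' + x₀v')` with `a` a multiple of `v₀`. Comparing the two
components shows that `dψ(v) = 0` forces `v' = 0` and `v₀x' = 0`; tangency then gives
`v₀x₀ = 0` as well, so `v₀ x = 0` and `v = 0` since `x ≠ 0`. For the symplectic form, the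
`a`-terms cancel by antisymmetry and what is left is `c² (w₀⟨x', v'⟩ - v₀⟨x', w'⟩)`, which
vanishes because tangency reads `⟨x', v'⟩ = -x₀v₀`.
-/

section WhitneyMap

variable {n : ℕ} {r : ℝ}

lemma fderiv_whitneyMap_apply (x v : Fin (n + 1) → ℝ) :
    fderiv ℝ (whitneyMap n r) x v =
      (fun i => -(2 * r * x 0) / (1 + x 0 ^ 2) ^ 2 * v 0 * x i.succ
          + r / (1 + x 0 ^ 2) * v i.succ,
       fun i => -(2 * r * x 0) / (1 + x 0 ^ 2) ^ 2 * v 0 * (x 0 * x i.succ)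
          + r / (1 + x 0 ^ 2) * (v 0 * x i.succ + x 0 * v i.succ)) := by
  have hφ := (hasDerivAt_const (x 0) r).div
    (((hasDerivAt_id' (x 0)).pow 2).const_add 1) (by positivity : (1 : ℝ) + x 0 ^ 2 ≠ 0)
  have hc := hφ.comp_hasFDerivAt x (hasFDerivAt_apply (𝕜 := ℝ) 0 x)
  have H : HasFDerivAt (whitneyMap n r) _ x :=
    (hasFDerivAt_pi.2 fun i : Fin n => hc.mul (hasFDerivAt_apply i.succ x)).prodMk
      (hasFDerivAt_pi.2 fun i : Fin n =>
        hc.mul ((hasFDerivAt_apply 0 x).mul (hasFDerivAt_apply i.succ x)))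
  rw [H.fderiv]
  ext i <;> simp <;> field_simp <;> ring

lemma fderiv_whitneyMap_apply_eq_zero (hr : r ≠ 0) {x v : Fin (n + 1) → ℝ}
    (h : fderiv ℝ (whitneyMap n r) x v = 0) :
    (∀ i : Fin n, v 0 * x i.succ = 0) ∧ ∀ i : Fin n, v i.succ = 0 := by
  rw [fderiv_whitneyMap_apply] at h
  set a := -(2 * r * x 0) / (1 + x 0 ^ 2) ^ 2
  set c := r / (1 + x 0 ^ 2)
  have hc : c ≠ 0 := div_ne_zero hr (by positivity)
  have h₁ (i : Fin n) : a * v 0 * x i.succ + c * v i.succ = 0 := congrFun (congrArg Prod.fst h) i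
  have h₂ (i : Fin n) : a * v 0 * (x 0 * x i.succ) + c * (v 0 * x i.succ + x 0 * v i.succ) = 0 :=
    congrFun (congrArg Prod.snd h) i
  have hx' (i : Fin n) : v 0 * x i.succ = 0 :=
    (mul_eq_zero.mp (by linear_combination h₂ i - x 0 * h₁ i)).resolve_left hc
  refine ⟨hx', fun i => (mul_eq_zero.mp ?_).resolve_left hc⟩
  linear_combination h₁ i - a * hx' i

lemma stdSymp_fderiv_whitneyMap (x v w : Fin (n + 1) → ℝ) :
    stdSymp n (fderiv ℝ (whitneyMap n r) x v) (fderiv ℝ (whitneyMap n r) x w) =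
      (r / (1 + x 0 ^ 2)) ^ 2 *
        (w 0 * ∑ i : Fin n, x i.succ * v i.succ - v 0 * ∑ i : Fin n, x i.succ * w i.succ) := by
  simp only [stdSymp, fderiv_whitneyMap_apply, Finset.mul_sum, ← Finset.sum_sub_distrib]
  exact Finset.sum_congr rfl fun i _ => by ring

end WhitneyMap

theorem whitney_lagrangian_immersion_general {n : ℕ} (r : ℝ) (hr : 0 < r)
    (x : Fin (n + 1) → ℝ) (hx : ∑ i, (x i) ^ 2 = 1) :
    (∀ v : Fin (n + 1) → ℝ, (∑ i, x i * v i = 0) →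
        fderiv ℝ (whitneyMap n r) x v = 0 → v = 0) ∧
      ∀ v w : Fin (n + 1) → ℝ, (∑ i, x i * v i = 0) → (∑ i, x i * w i = 0) →
        stdSymp n (fderiv ℝ (whitneyMap n r) x v) (fderiv ℝ (whitneyMap n r) x w) = 0 := by
  refine ⟨fun v hv hdv => ?_, fun v w hv hw => ?_⟩
  · obtain ⟨hx', hv'⟩ := fderiv_whitneyMap_apply_eq_zero hr.ne' hdv
    have hx₀ : x 0 * v 0 = 0 := by simpa [Fin.sum_univ_succ, hv'] using hv
    have hvx : v 0 • x = 0 := funext <| Fin.cases (by simpa [mul_comm] using hx₀) hx'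
    have hx_ne : x ≠ 0 := by rintro rfl; simp at hx
    have hv₀ : v 0 = 0 := (smul_eq_zero.mp hvx).resolve_right hx_ne
    exact funext <| Fin.cases hv₀ hv'
  · rw [Fin.sum_univ_succ] at hv hw
    rw [stdSymp_fderiv_whitneyMap]
    linear_combination (r / (1 + x 0 ^ 2)) ^ 2 * (w 0 * hv - v 0 * hw)

/-- The Whitney map is a Lagrangian immersion of Sⁿ into ℂⁿ: at each point of the
unit sphere its differential is injective on the tangent space (rank n), and the
pullback of the standard symplectic form vanishes on the tangent space. -/
theorem whitney_lagrangian_immersion {n : ℕ} (hn : 1 ≤ n) (r : ℝ) (hr : 0 < r)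
    (x : Fin (n + 1) → ℝ) (hx : ∑ i, (x i) ^ 2 = 1) :
    (∀ v : Fin (n + 1) → ℝ, (∑ i, x i * v i = 0) →
        fderiv ℝ (whitneyMap n r) x v = 0 → v = 0) ∧
      ∀ v w : Fin (n + 1) → ℝ, (∑ i, x i * v i = 0) → (∑ i, x i * w i = 0) →
        stdSymp n (fderiv ℝ (whitneyMap n r) x v) (fderiv ℝ (whitneyMap n r) x w) = 0 :=
  whitney_lagrangian_immersion_general r hr x hx
end
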